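/- arXiv:1811.07404 — 3 statements merged into one kernel-verified Lean document; each statement's English description precedes it below -/
import Mathlib

section
/- Let p(n) denote the number of partitions of the positive integer n. Then limsup_{n→∞} p(n)^{1/n} = 1; that is, the number of partitions of n grows subexponentially. -/
open Filter Multiset

namespace PartitionBound

variable {n : ℕ}

lemma card_parts_le (P : Nat.Partition n) : Multiset.card P.parts ≤ n := by
  have := Multiset.card_nsmul_le_sum (fun x hx => P.parts_pos hx)
  simpa [P.parts_sum] using this

lemma count_le (P : Nat.Partition n) (j : ℕ) : P.parts.count j ≤ n :=
  (Multiset.count_le_card _ _).trans (card_parts_le P)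

/-- the sorted list of "big" parts (parts exceeding `Nat.sqrt n`). -/
def bigList (P : Nat.Partition n) : List ℕ :=
  ((P.parts.filter (fun j => Nat.sqrt n < j)).sort (· ≤ ·))

lemma bigList_coe (P : Nat.Partition n) :
    (bigList P : Multiset ℕ) = P.parts.filter (fun j => Nat.sqrt n < j) :=
  Multiset.sort_eq _ _

lemma bigList_length (P : Nat.Partition n) : (bigList P).length ≤ Nat.sqrt n := by
  set s := Nat.sqrt n with hs
  have hlen : (bigList P).length = Multiset.card (P.parts.filter (fun j => s < j)) := by
    rw [← bigList_coe P]; simp [hs]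
  have hsum : (P.parts.filter (fun j => s < j)).sum ≤ n := by
    obtain ⟨u, hu⟩ := Multiset.le_iff_exists_add.1 (Multiset.filter_le (fun j => s < j) P.parts)
    have : P.parts.sum = (P.parts.filter (fun j => s < j)).sum + u.sum := by
      conv_lhs => rw [hu]
      rw [Multiset.sum_add]
    have hps := P.parts_sum
    omega
  have hmul : (bigList P).length * (s + 1) ≤ n := by
    rw [hlen]
    calc Multiset.card (P.parts.filter (fun j => s < j)) * (s+1)
        ≤ (P.parts.filter (fun j => s < j)).sum := by
          have := Multiset.card_nsmul_le_sum (s := P.parts.filter (fun j => s < j))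
            (a := s + 1) (fun x hx => (Multiset.mem_filter.1 hx).2)
          simpa [Nat.nsmul_eq_mul] using this
      _ ≤ n := hsum
  have hn : n < (s + 1) * (s + 1) := by
    simpa [hs, Nat.succ_eq_add_one, pow_two] using Nat.lt_succ_sqrt' n
  by_contra h
  push_neg at h
  have : (s + 1) * (s + 1) ≤ (bigList P).length * (s + 1) := Nat.mul_le_mul_right _ h
  omega

lemma bigList_mem_le (P : Nat.Partition n) {x : ℕ} (hx : x ∈ bigList P) : x ≤ n := by
  have hx' : x ∈ P.parts := by
    have : x ∈ (bigList P : Multiset ℕ) := by simpa using hx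
    rw [bigList_coe] at this
    exact (Multiset.mem_filter.1 this).1
  calc x ≤ P.parts.sum := Multiset.single_le_sum (fun y _ => Nat.zero_le y) _ hx'
    _ = n := P.parts_sum

/-- the encoding map -/
def encode (P : Nat.Partition n) :
    (Fin (Nat.sqrt n) → Fin (n+1)) × (Fin (Nat.sqrt n) → Fin (n+1)) :=
  ⟨fun i => ⟨P.parts.count ((i : ℕ) + 1), Nat.lt_succ_of_le (count_le P _)⟩,
   fun i => ⟨(bigList P).getD i 0, Nat.lt_succ_of_le (by
      rcases Nat.lt_or_ge i.val (bigList P).length with h | h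
      · rw [List.getD_eq_getElem _ _ h]
        exact bigList_mem_le P (List.getElem_mem h)
      · rw [List.getD_eq_default _ _ h]; exact Nat.zero_le _)⟩⟩

lemma bigList_pos (P : Nat.Partition n) {i : ℕ} (h : i < (bigList P).length) :
    0 < (bigList P)[i] := by
  have hmem : (bigList P)[i] ∈ (bigList P : Multiset ℕ) := by
    simpa using List.getElem_mem h
  rw [bigList_coe] at hmem
  exact Nat.lt_of_le_of_lt (Nat.zero_le _) (Multiset.mem_filter.1 hmem).2

lemma encode_injective : Function.Injective (encode (n := n)) := by
  intro P Q h
  set s := Nat.sqrt n with hs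
  obtain ⟨h1, h2⟩ := Prod.mk.injEq .. ▸ h
  have h1' : ∀ i : Fin s, P.parts.count ((i : ℕ) + 1) = Q.parts.count ((i : ℕ) + 1) := fun i => by
    have := congrFun h1 i; simpa [encode] using this
  have h2' : ∀ i : Fin s, (bigList P).getD i 0 = (bigList Q).getD i 0 := fun i => by
    have := congrFun h2 i; simpa [encode] using this
  -- lengths are equal
  have hlen : (bigList P).length = (bigList Q).length := by
    by_contra hne
    rcases Nat.lt_or_ge (bigList P).length (bigList Q).length with hlt | hge
    · have hi : (bigList P).length < s := Nat.lt_of_lt_of_le hlt (bigList_length Q)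
      have := h2' ⟨(bigList P).length, hi⟩
      rw [List.getD_eq_default _ _ (le_refl _), List.getD_eq_getElem _ _ hlt] at this
      exact absurd this.symm (Nat.ne_of_gt (bigList_pos Q hlt))
    · have hlt : (bigList Q).length < (bigList P).length := by omega
      have hi : (bigList Q).length < s := Nat.lt_of_lt_of_le hlt (bigList_length P)
      have := h2' ⟨(bigList Q).length, hi⟩
      rw [List.getD_eq_default _ _ (le_refl _), List.getD_eq_getElem _ _ hlt] at this
      exact absurd this (Nat.ne_of_gt (bigList_pos P hlt))
  have hbig : bigList P = bigList Q := by
    apply List.ext_getElem hlen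
    intro i hi1 hi2
    have hi : i < s := Nat.lt_of_lt_of_le hi1 (bigList_length P)
    have := h2' ⟨i, hi⟩
    rwa [List.getD_eq_getElem _ _ hi1, List.getD_eq_getElem _ _ hi2] at this
  have hfilter : P.parts.filter (fun j => s < j) = Q.parts.filter (fun j => s < j) := by
    rw [← bigList_coe P, ← bigList_coe Q, hbig]
  ext1
  ext j
  rcases Nat.eq_zero_or_pos j with rfl | hj
  · rw [Multiset.count_eq_zero_of_notMem, Multiset.count_eq_zero_of_notMem]
    · exact fun hc => absurd (Q.parts_pos hc) (by omega)
    · exact fun hc => absurd (P.parts_pos hc) (by omega)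
  rcases Nat.lt_or_ge s j with hbigj | hsmall
  · have hP : P.parts.count j = (P.parts.filter (fun j => s < j)).count j :=
      (Multiset.count_filter_of_pos hbigj).symm
    have hQ : Q.parts.count j = (Q.parts.filter (fun j => s < j)).count j :=
      (Multiset.count_filter_of_pos hbigj).symm
    rw [hP, hQ, hfilter]
  · have hj' : j - 1 < s := by omega
    have := h1' ⟨j - 1, hj'⟩
    simpa [Nat.sub_add_cancel hj] using this

lemma card_partition_le (n : ℕ) :
    Fintype.card (Nat.Partition n) ≤ (n + 1) ^ (2 * Nat.sqrt n) := by
  calc Fintype.card (Nat.Partition n)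
      ≤ Fintype.card ((Fin (Nat.sqrt n) → Fin (n+1)) × (Fin (Nat.sqrt n) → Fin (n+1))) :=
        Fintype.card_le_of_injective _ encode_injective
    _ = (n + 1) ^ (2 * Nat.sqrt n) := by
        simp [Fintype.card_fun, two_mul, pow_add]

open Real in
lemma tendsto_exponent :
    Filter.Tendsto (fun n : ℕ => 2 * (Nat.sqrt n : ℝ) * (n : ℝ)⁻¹ * Real.log ((n : ℝ) + 1))
      atTop (nhds 0) := by
  have hc : Filter.Tendsto (fun n : ℕ => 4 * (Real.log n / (n : ℝ) ^ (1/2 : ℝ)))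
      atTop (nhds 0) := by
    have h0 : Filter.Tendsto (fun x : ℝ => Real.log x / x ^ (1/2 : ℝ)) atTop (nhds 0) :=
      (isLittleO_log_rpow_atTop (by norm_num : (0:ℝ) < 1/2)).tendsto_div_nhds_zero
    have := (h0.comp (tendsto_natCast_atTop_atTop (R := ℝ))).const_mul (4:ℝ)
    simpa using this
  apply squeeze_zero' ?_ ?_ hc
  · filter_upwards [eventually_ge_atTop 1] with n hn
    have h2 : (0:ℝ) ≤ Real.log ((n:ℝ) + 1) := Real.log_nonneg (by
      have : (1:ℝ) ≤ n := by exact_mod_cast hn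
      linarith)
    positivity
  · filter_upwards [eventually_ge_atTop 2] with n hn
    have hn0 : (0:ℝ) < (n : ℝ) := by
      have : (2:ℝ) ≤ n := by exact_mod_cast hn
      linarith
    have hs0 : (0:ℝ) < Real.sqrt n := Real.sqrt_pos.2 hn0
    have hsq : (Nat.sqrt n : ℝ) ≤ Real.sqrt n := by
      rw [show ((n:ℝ)) = ((n:ℕ):ℝ) from rfl, Real.sqrt_eq_rpow]
      have h1 : ((Nat.sqrt n : ℝ)) ^ (2:ℕ) ≤ (n:ℝ) := by
        exact_mod_cast Nat.sqrt_le' n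
      calc (Nat.sqrt n : ℝ) = (((Nat.sqrt n : ℝ)) ^ (2:ℕ)) ^ ((1:ℝ)/2) := by
            rw [← Real.rpow_natCast ((Nat.sqrt n : ℝ)) 2, ← Real.rpow_mul (by positivity)]
            norm_num
        _ ≤ ((n:ℝ)) ^ ((1:ℝ)/2) := Real.rpow_le_rpow (by positivity) h1 (by norm_num)
        _ = ((n:ℕ):ℝ) ^ ((1:ℝ)/2) := by norm_num
    have hlog1 : Real.log ((n:ℝ)+1) ≤ 2 * Real.log n := by
      have h2n : (2:ℝ) ≤ n := by exact_mod_cast hn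
      have h1 : ((n:ℝ)+1) ≤ (n:ℝ)^2 := by nlinarith
      calc Real.log ((n:ℝ)+1) ≤ Real.log ((n:ℝ)^2) := Real.log_le_log (by positivity) h1
        _ = 2 * Real.log n := by rw [Real.log_pow]; push_cast; ring
    have hlogpos : 0 ≤ Real.log ((n:ℝ)+1) := Real.log_nonneg (by linarith)
    have hmulself : Real.sqrt n * Real.sqrt n = (n:ℝ) := Real.mul_self_sqrt hn0.le
    calc 2 * (Nat.sqrt n : ℝ) * (n:ℝ)⁻¹ * Real.log ((n:ℝ)+1)
        ≤ 2 * Real.sqrt n * (n:ℝ)⁻¹ * (2 * Real.log n) := by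
          apply mul_le_mul ?_ hlog1 hlogpos (by positivity)
          apply mul_le_mul_of_nonneg_right ?_ (by positivity)
          linarith
      _ = 4 * (Real.log n / (n:ℝ) ^ (1/2:ℝ)) := by
          rw [← Real.sqrt_eq_rpow]
          field_simp
          linear_combination (4 * Real.log n) * hmulself

end PartitionBound

/-- The number of partitions of `n` grows subexponentially:
`limsup_{n→∞} p(n)^{1/n} = 1`. -/
theorem limsup_partition_count_rpow_inv :
    Filter.limsup
      (fun n : ℕ => (Fintype.card (Nat.Partition n) : ℝ) ^ ((n : ℝ)⁻¹))
      Filter.atTop = 1 := by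
  have htend : Filter.Tendsto (fun n : ℕ => (Fintype.card (Nat.Partition n) : ℝ) ^ ((n : ℝ)⁻¹))
      atTop (nhds 1) := by
    have hb : Filter.Tendsto (fun n : ℕ => ((n:ℝ)+1) ^ (2 * (Nat.sqrt n : ℝ) * (n:ℝ)⁻¹))
        atTop (nhds 1) := by
      have h := (Real.continuous_exp.tendsto 0).comp PartitionBound.tendsto_exponent
      simp only [Function.comp_def, Real.exp_zero] at h
      refine h.congr fun n => ?_
      rw [Real.rpow_def_of_pos (by positivity)]
      ring_nf
    apply tendsto_of_tendsto_of_tendsto_of_le_of_le' tendsto_const_nhds hb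
    · filter_upwards with n
      apply Real.one_le_rpow ?_ (by positivity)
      exact_mod_cast Fintype.card_pos
    · filter_upwards with n
      have hle : (Fintype.card (Nat.Partition n) : ℝ) ≤ ((n:ℝ)+1) ^ (2 * Nat.sqrt n : ℕ) := by
        exact_mod_cast PartitionBound.card_partition_le n
      calc (Fintype.card (Nat.Partition n) : ℝ) ^ ((n:ℝ)⁻¹)
          ≤ (((n:ℝ)+1) ^ (2 * Nat.sqrt n : ℕ)) ^ ((n:ℝ)⁻¹) :=
            Real.rpow_le_rpow (by positivity) hle (by positivity)
        _ = ((n:ℝ)+1) ^ (2 * (Nat.sqrt n : ℝ) * (n:ℝ)⁻¹) := by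
            rw [← Real.rpow_natCast ((n:ℝ)+1) (2 * Nat.sqrt n), ← Real.rpow_mul (by positivity)]
            push_cast; ring_nf
  exact htend.limsup_eq
end

section
/- Let G be a graph, S a finite subgraph of G, and o a vertex. For Bernoulli bond percolation with parameter p, the probability that the cluster of o equals S is P(p) = p^{|E(S)|} (1-p)^{|∂S|}, where ∂S is the set of edges of G incident with S but not in E(S). This polynomial, viewed as an entire function P(z) on ℂ, satisfies |P(z)| ≤ ((1-x+M)/(1-x-M))^{|∂S|} · P(x+M) for every M > 0 and 0 ≤ x < 1 with x+M < 1, and every z in the closed disk D(x,M). -/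
theorem norm_pow_mul_one_sub_pow_le {𝕜 : Type*} [NormedDivisionRing 𝕜] {z a : 𝕜} {r : ℝ}
    (hz : ‖z - a‖ ≤ r) (m n : ℕ) :
    ‖z ^ m * (1 - z) ^ n‖ ≤ (‖a‖ + r) ^ m * (‖1 - a‖ + r) ^ n := by
  have hz_norm : ‖z‖ ≤ ‖a‖ + r := (norm_le_norm_add_norm_sub' z a).trans (by linarith)
  have hz_one_sub : ‖1 - z‖ ≤ ‖1 - a‖ + r := by
    have : ‖(1 - z) - (1 - a)‖ ≤ r := by rwa [sub_sub_sub_cancel_left, norm_sub_rev]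
    exact (norm_le_norm_add_norm_sub' _ _).trans (by linarith)
  rw [norm_mul, norm_pow, norm_pow]
  gcongr
  exact pow_nonneg ((norm_nonneg z).trans hz_norm) m

theorem cluster_eq_subgraph_prob_complex_bound_general
    {V : Type*} (G : SimpleGraph V) (S : G.Subgraph)
    (boundary : Set (Sym2 V))
    (P : ℂ → ℂ)
    (hP : P = fun z : ℂ => z ^ S.edgeSet.ncard * (1 - z) ^ boundary.ncard)
    (M x : ℝ) (hx0 : 0 ≤ x) (hx1 : x < 1) (hxM : x + M < 1) :
    ∀ z ∈ Metric.closedBall (x : ℂ) M,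
      ‖P z‖ ≤
        ((1 - x + M) / (1 - x - M)) ^ boundary.ncard *
          ((x + M) ^ S.edgeSet.ncard * (1 - (x + M)) ^ boundary.ncard) := by
  intro z hz
  subst hP
  have hnorm_x : ‖(x : ℂ)‖ = x := by simp [abs_of_nonneg hx0]
  have hnorm_one_sub_x : ‖1 - (x : ℂ)‖ = 1 - x := by
    rw [← Complex.ofReal_one, ← Complex.ofReal_sub, Complex.norm_real, Real.norm_eq_abs,
      abs_of_pos (sub_pos.mpr hx1)]
  have hgap : (1 : ℝ) - (x + M) ≠ 0 := by linarith
  calc ‖z ^ S.edgeSet.ncard * (1 - z) ^ boundary.ncard‖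
      ≤ (‖(x : ℂ)‖ + M) ^ S.edgeSet.ncard * (‖1 - (x : ℂ)‖ + M) ^ boundary.ncard :=
        norm_pow_mul_one_sub_pow_le (mem_closedBall_iff_norm.mp hz) _ _
    _ = ((1 - x + M) / (1 - (x + M))) ^ boundary.ncard *
          ((x + M) ^ S.edgeSet.ncard * (1 - (x + M)) ^ boundary.ncard) := by
        rw [hnorm_x, hnorm_one_sub_x, div_pow, mul_left_comm, div_mul_cancel₀ _ (pow_ne_zero _ hgap)]
    _ = _ := by rw [sub_add_eq_sub_sub]

/-- For Bernoulli bond percolation on a graph `G` with a finite subgraph `S`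
containing the vertex `o`, the probability of the event `{C(o) = S}` is the
polynomial `P(p) = p^{|E(S)|} (1-p)^{|∂S|}`, where `∂S` is the set of edges of
`G` incident with `S` but not belonging to `S`.  Its entire extension satisfies
`|P(z)| ≤ ((1-x+M)/(1-x-M))^{|∂S|} · P(x+M)` on the closed disk `D(x,M)`,
for every `M > 0` and `0 ≤ x < 1` with `x + M < 1`. -/
theorem cluster_eq_subgraph_prob_complex_bound
    {V : Type*} (G : SimpleGraph V) (S : G.Subgraph) (o : V) (ho : o ∈ S.verts)
    (hEfin : S.edgeSet.Finite)
    (boundary : Set (Sym2 V))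
    (hboundary : boundary =
      {e ∈ G.edgeSet | (∃ v ∈ S.verts, v ∈ e) ∧ e ∉ S.edgeSet})
    (hBfin : boundary.Finite)
    (P : ℂ → ℂ)
    (hP : P = fun z : ℂ => z ^ S.edgeSet.ncard * (1 - z) ^ boundary.ncard)
    (M x : ℝ) (hM : 0 < M) (hx0 : 0 ≤ x) (hx1 : x < 1) (hxM : x + M < 1) :
    ∀ z ∈ Metric.closedBall (x : ℂ) M,
      ‖P z‖ ≤
        ((1 - x + M) / (1 - x - M)) ^ boundary.ncard *
          ((x + M) ^ S.edgeSet.ncard * (1 - (x + M)) ^ boundary.ncard) :=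
  cluster_eq_subgraph_prob_complex_bound_general G S boundary P hP M x hx0 hx1 hxM
end

section
/- Let V be a countable set and μ : V² → ℝ_{≥0} with Σ_y μ(xy) ≤ 1 for every x. For a finite graph S on a subset of V containing a vertex o, define P(t) = e^{-t·μ(S)} · Π_{e∈E(S)} (e^{t·μ(e)} - 1), where μ(S) is the sum of μ(e) over all edges e incident with a vertex of S. Then for every M > 0, x ≥ 0 and z in the closed disk D(x,M) in ℂ, |P(z)| ≤ e^{2M|V(S)|} · P(x+M). -/
/-!
On the disk `D(x, M)` we have `Re z ≥ x - M` and `|z| ≤ x + M`. The first bounds the exponential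
prefactor by `e^{-(x - M) μ(S)} = e^{2M μ(S)} e^{-(x + M) μ(S)}`, and `μ(S) ≤ |V(S)|` because every
edge incident with `S` is counted in the row sum of one of its endpoints in `V(S)`. The second bounds
each edge factor through `|e^{u} - 1| ≤ e^{|u|} - 1`, read off from the power series.
-/

open Function Metric

lemma Complex.norm_exp_sub_one_le_exp_norm_sub_one (z : ℂ) :
    ‖Complex.exp z - 1‖ ≤ Real.exp ‖z‖ - 1 := by
  simpa using Complex.norm_exp_sub_sum_le_exp_norm_sub_sum z 1

lemma Complex.sub_le_re_of_mem_closedBall {z c : ℂ} {r : ℝ} (hz : z ∈ closedBall c r) :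
    c.re - r ≤ z.re := by
  have h := (Complex.abs_re_le_norm (z - c)).trans (mem_closedBall_iff_norm.1 hz)
  rw [Complex.sub_re] at h
  linarith [(abs_le.1 h).1]

lemma hasSum_incident_le_card_mul {V : Type*} {w : Sym2 V → ℝ} (hw : ∀ e, 0 ≤ w e) {c : ℝ}
    (hrow : ∀ x : V, ∃ sx : ℝ, HasSum (fun y : V => w s(x, y)) sx ∧ sx ≤ c) (Vs : Finset V)
    {μS : ℝ} (hμS : HasSum (fun e : {e : Sym2 V // ∃ v ∈ Vs, v ∈ e} => w e) μS) :
    μS ≤ Vs.card * c := by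
  choose s hs hsc using hrow
  have hprod : HasSum (fun p : Vs × V => w s(p.1.1, p.2)) (∑ v : Vs, s v) := by
    obtain ⟨T, hT⟩ := (summable_prod_of_nonneg (f := fun p : Vs × V => w s(p.1.1, p.2))
      fun _ => hw _).2 ⟨fun v => (hs v.1).summable, .of_finite⟩
    have hfib : HasSum (fun v : Vs => s v) T := hT.prod_fiberwise fun v => hs v.1
    rwa [hfib.unique (hasSum_fintype fun v : Vs => s v)] at hT
  -- An incident edge is `s(v, y)` for a chosen endpoint `v ∈ Vs`; this makes it an index of `hprod`.
  let pick : {e : Sym2 V // ∃ v ∈ Vs, v ∈ e} → Vs × V := fun e =>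
    (⟨e.2.choose, e.2.choose_spec.1⟩, Sym2.Mem.other e.2.choose_spec.2)
  have hpick : ∀ e, s((pick e).1.1, (pick e).2) = e.1 := fun e => Sym2.other_spec _
  have hinj : Injective pick := fun a b hab => Subtype.ext <| by rw [← hpick a, ← hpick b, hab]
  calc μS ≤ ∑ v : Vs, s v :=
        hasSum_le_inj pick hinj (fun p _ => hw _) (fun e => (congrArg w (hpick e)).ge) hμS hprod
    _ ≤ ∑ _v : Vs, c := Finset.sum_le_sum fun v _ => hsc v
    _ = Vs.card * c := by simp

lemma norm_cexp_neg_mul_le {μ N M x : ℝ} (hμ : 0 ≤ μ) (hμN : μ ≤ N) {z : ℂ}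
    (hz : z ∈ closedBall (x : ℂ) M) :
    ‖Complex.exp (-z * μ)‖ ≤ Real.exp (2 * M * N) * Real.exp (-(x + M) * μ) := by
  have hM : 0 ≤ M := dist_nonneg.trans hz
  have hre : x - M ≤ z.re := by simpa using Complex.sub_le_re_of_mem_closedBall hz
  rw [Complex.norm_exp, ← Real.exp_add, Real.exp_le_exp]
  simp only [Complex.mul_re, Complex.neg_re, Complex.ofReal_re, Complex.neg_im,
    Complex.ofReal_im, mul_zero, sub_zero]
  nlinarith [mul_le_mul_of_nonneg_left hμN hM]

lemma norm_cexp_mul_sub_one_le {a r : ℝ} (ha : 0 ≤ a) {z : ℂ} (hz : ‖z‖ ≤ r) :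
    ‖Complex.exp (z * a) - 1‖ ≤ Real.exp (r * a) - 1 := by
  refine (Complex.norm_exp_sub_one_le_exp_norm_sub_one _).trans ?_
  rw [norm_mul, Complex.norm_real, Real.norm_of_nonneg ha]
  gcongr

theorem long_range_cluster_prob_bound_general
    {V : Type*} (w : Sym2 V → ℝ) (hw : ∀ e, 0 ≤ w e)
    (hrow : ∀ x : V, ∃ sx : ℝ, HasSum (fun y : V => w s(x, y)) sx ∧ sx ≤ 1)
    (Vs : Finset V)
    (ES : Finset (Sym2 V))
    (μS : ℝ)
    (hμS : HasSum (fun e : {e : Sym2 V // ∃ v ∈ Vs, v ∈ e} => w e) μS)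
    (P : ℂ → ℂ)
    (hP : P = fun z : ℂ =>
      Complex.exp (-z * μS) * ∏ e ∈ ES, (Complex.exp (z * w e) - 1)) :
    ∀ M : ℝ, 0 < M → ∀ x : ℝ, 0 ≤ x → ∀ z ∈ Metric.closedBall (x : ℂ) M,
      ‖P z‖ ≤
        Real.exp (2 * M * Vs.card) *
          (Real.exp (-(x + M) * μS) *
            ∏ e ∈ ES, (Real.exp ((x + M) * w e) - 1)) := by
  intro M _ x hx z hz
  have hμ : 0 ≤ μS := hμS.nonneg fun _ => hw _
  have hμcard : μS ≤ Vs.card := by simpa using hasSum_incident_le_card_mul hw hrow Vs hμS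
  have hzx : ‖z‖ ≤ x + M := by
    simpa [abs_of_nonneg hx] using norm_le_of_mem_closedBall hz
  have hedge : ∀ e ∈ ES, ‖Complex.exp (z * w e) - 1‖ ≤ Real.exp ((x + M) * w e) - 1 :=
    fun e _ => norm_cexp_mul_sub_one_le (hw e) hzx
  rw [hP, norm_mul, norm_prod, ← mul_assoc]
  exact mul_le_mul (norm_cexp_neg_mul_le hμ hμcard hz)
    (Finset.prod_le_prod (fun e _ => norm_nonneg _) hedge)
    (Finset.prod_nonneg fun e _ => norm_nonneg _) (by positivity)

/-- Long-range percolation: let `w` be a nonnegative edge weight on a countable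
vertex set with all row sums `Σ_y w(xy) ≤ 1`, and let `S` be a finite graph
with vertex set `Vs ∋ o` and edge set `ES`.  With `μ(S)` the sum of the
weights of all edges incident with `S`, the entire extension
`P(z) = e^{-z μ(S)} · Π_{e ∈ E(S)} (e^{z w(e)} - 1)` of the probability that
the cluster of `o` equals `S` satisfies
`|P(z)| ≤ e^{2M|V(S)|} · P(x+M)` for all `M > 0`, `x ≥ 0`, `z ∈ D(x,M)`. -/
theorem long_range_cluster_prob_bound
    {V : Type*} (w : Sym2 V → ℝ) (hw : ∀ e, 0 ≤ w e)
    (hrow : ∀ x : V, ∃ sx : ℝ, HasSum (fun y : V => w s(x, y)) sx ∧ sx ≤ 1)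
    (o : V) (Vs : Finset V) (ho : o ∈ Vs)
    (ES : Finset (Sym2 V)) (hES : ∀ e ∈ ES, ∀ v ∈ e, v ∈ Vs)
    (μS : ℝ)
    (hμS : HasSum (fun e : {e : Sym2 V // ∃ v ∈ Vs, v ∈ e} => w e) μS)
    (P : ℂ → ℂ)
    (hP : P = fun z : ℂ =>
      Complex.exp (-z * μS) * ∏ e ∈ ES, (Complex.exp (z * w e) - 1)) :
    ∀ M : ℝ, 0 < M → ∀ x : ℝ, 0 ≤ x → ∀ z ∈ Metric.closedBall (x : ℂ) M,
      ‖P z‖ ≤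
        Real.exp (2 * M * Vs.card) *
          (Real.exp (-(x + M) * μS) *
            ∏ e ∈ ES, (Real.exp ((x + M) * w e) - 1)) :=
  long_range_cluster_prob_bound_general w hw hrow Vs ES μS hμS P hP
end
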